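/- Let A be a Banach–Tate ring and P a finite Banach A-module, i.e. a Banach A-module that is finitely generated as an A-module. Then P has property (Pr) if and only if P is projective as an (abstract) A-module. -/

import Mathlib

open scoped Classical

universe u v w

/-- A (non-archimedean, submultiplicative) ring norm with values in `ℝ`. -/
structure IsRingNorm {A : Type*} [Ring A] (v : A → ℝ) : Prop where
  nonneg : ∀ a, 0 ≤ v a
  eq_zero_iff : ∀ a, v a = 0 ↔ a = 0
  map_one : v 1 = 1
  map_neg : ∀ a, v (-a) = v a
  add_le : ∀ a b, v (a + b) ≤ max (v a) (v b)
  mul_le : ∀ a b, v (a * b) ≤ v a * v b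

theorem IsRingNorm.map_zero {A : Type*} [Ring A] {v : A → ℝ} (hv : IsRingNorm v) :
    v 0 = 0 := (hv.eq_zero_iff 0).mpr rfl

/-- A norm on an `A`-module, compatible with a ring norm `v` on `A`. -/
structure IsModuleNorm {A : Type*} [Ring A] (v : A → ℝ) {M : Type*} [AddCommGroup M]
    [Module A M] (nm : M → ℝ) : Prop where
  nonneg : ∀ m, 0 ≤ nm m
  eq_zero_iff : ∀ m, nm m = 0 ↔ m = 0
  map_neg : ∀ m, nm (-m) = nm m
  add_le : ∀ m n, nm (m + n) ≤ max (nm m) (nm n)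
  smul_le : ∀ (a : A) (m : M), nm (a • m) ≤ v a * nm m

/-- A sequence is Cauchy with respect to a norm. -/
def NormCauchy {M : Type*} [AddCommGroup M] (nm : M → ℝ) (s : ℕ → M) : Prop :=
  ∀ ε : ℝ, 0 < ε → ∃ N : ℕ, ∀ i j : ℕ, N ≤ i → N ≤ j → nm (s i - s j) < ε

/-- A sequence converges to `x` with respect to a norm. -/
def NormLim {M : Type*} [AddCommGroup M] (nm : M → ℝ) (s : ℕ → M) (x : M) : Prop :=
  ∀ ε : ℝ, 0 < ε → ∃ N : ℕ, ∀ i : ℕ, N ≤ i → nm (s i - x) < ε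

/-- Completeness: every Cauchy sequence converges. -/
def NormComplete {M : Type*} [AddCommGroup M] (nm : M → ℝ) : Prop :=
  ∀ s : ℕ → M, NormCauchy nm s → ∃ x : M, NormLim nm s x

/-- Continuity of a map between modules equipped with norms. -/
def NormContinuous {M N : Type*} [AddCommGroup M] [AddCommGroup N]
    (nmM : M → ℝ) (nmN : N → ℝ) (f : M → N) : Prop :=
  ∀ m : M, ∀ ε : ℝ, 0 < ε → ∃ δ : ℝ, 0 < δ ∧
    ∀ m' : M, nmM (m' - m) < δ → nmN (f m' - f m) < ε

/-- A Banach–Tate ring: a complete normed ring containing a multiplicative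
topologically nilpotent unit. -/
structure IsBanachTate {A : Type*} [Ring A] (v : A → ℝ) : Prop where
  isRingNorm : IsRingNorm v
  complete : NormComplete v
  exists_unit : ∃ ϖ : A, IsUnit ϖ ∧ v ϖ < 1 ∧ ∀ b, v (ϖ * b) = v ϖ * v b
/-- `cA v hv I` is the Banach `A`-module `c_A(I)` of functions `I → A` tending to zero:
for every `ε > 0` only finitely many `i` satisfy `v (f i) > ε`. -/
def cA {A : Type u} [Ring A] (v : A → ℝ) (hv : IsRingNorm v) (I : Type v) :
    Submodule A (I → A) where
  carrier := {f | ∀ ε : ℝ, 0 < ε → {i : I | ε < v (f i)}.Finite}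
  add_mem' := by
    intro f g hf hg ε hε
    refine ((hf ε hε).union (hg ε hε)).subset ?_
    intro i hi
    simp only [Set.mem_setOf_eq, Pi.add_apply] at hi
    simp only [Set.mem_union, Set.mem_setOf_eq]
    by_contra hc
    push_neg at hc
    have h := le_trans (hv.add_le (f i) (g i)) (max_le hc.1 hc.2)
    exact absurd hi (not_lt.mpr h)
  zero_mem' := by
    intro ε hε
    have : {i : I | ε < v ((0 : I → A) i)} = ∅ := by
      ext i
      simp only [Set.mem_setOf_eq, Pi.zero_apply, Set.mem_empty_iff_false, iff_false, not_lt,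
        hv.map_zero]
      exact le_of_lt hε
    rw [this]; exact Set.finite_empty
  smul_mem' := by
    intro a f hf ε hε
    rcases eq_or_ne a 0 with rfl | ha
    · refine Set.finite_empty.subset ?_
      intro i hi
      simp only [Set.mem_setOf_eq, Pi.smul_apply, zero_smul, hv.map_zero] at hi
      exact absurd hi (not_lt.mpr (le_of_lt hε))
    · have hva : 0 < v a := by
        rcases lt_or_eq_of_le (hv.nonneg a) with h | h
        · exact h
        · exact absurd ((hv.eq_zero_iff a).mp h.symm) ha
      refine (hf (ε / v a) (div_pos hε hva)).subset ?_
      intro i hi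
      simp only [Set.mem_setOf_eq, Pi.smul_apply, smul_eq_mul] at hi
      simp only [Set.mem_setOf_eq]
      rw [div_lt_iff₀ hva]
      calc ε < v (a * f i) := hi
        _ ≤ v a * v (f i) := hv.mul_le a (f i)
        _ = v (f i) * v a := mul_comm _ _

/-- The norm on `c_A(I)`: the supremum (= maximum) of the norms of the values. -/
noncomputable def cNorm {A : Type u} [Ring A] (v : A → ℝ) {hv : IsRingNorm v} {I : Type v}
    (f : cA v hv I) : ℝ :=
  ⨆ i : I, v ((f : I → A) i)

/-- The canonical `i`-th basis vector `e_i` of `c_A(I)`. -/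
noncomputable def stdDelta {A : Type u} [Ring A] (v : A → ℝ) (hv : IsRingNorm v) {I : Type v} (i : I) :
    cA v hv I :=
  ⟨fun j => if j = i then 1 else 0, by
    intro ε hε
    refine (Set.finite_singleton i).subset ?_
    intro j hj
    simp only [Set.mem_setOf_eq] at hj
    simp only [Set.mem_singleton_iff]
    by_contra hji
    rw [if_neg hji, hv.map_zero] at hj
    exact absurd hj (not_lt.mpr (le_of_lt hε))⟩
/-- A linear map has finite rank if its image is contained in a finitely generated
submodule of the target. -/
def FiniteRank {A : Type u} [Ring A] {M : Type v} {N : Type w} [AddCommGroup M] [Module A M]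
    [AddCommGroup N] [Module A N] (f : M →ₗ[A] N) : Prop :=
  ∃ P : Submodule A N, P.FG ∧ LinearMap.range f ≤ P

/-- A continuous linear map is compact if it is a limit, in the operator norm, of
continuous finite rank maps. -/
def IsCompactOp {A : Type u} [Ring A] {M : Type v} {N : Type w} [AddCommGroup M] [Module A M]
    [AddCommGroup N] [Module A N] (nmM : M → ℝ) (nmN : N → ℝ) (f : M →ₗ[A] N) : Prop :=
  NormContinuous nmM nmN f ∧
  ∀ ε : ℝ, 0 < ε → ∃ g : M →ₗ[A] N, NormContinuous nmM nmN g ∧ FiniteRank g ∧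
    ∀ m : M, nmN (f m - g m) ≤ ε * nmM m

/-- The matrix coefficients `a_{i,j}` of a linear map `f : M → N`, with respect to
ON bases of `M` and `N` given by isomorphisms with `c_A(I)` and `c_A(J)`:
`f(e_i) = Σ_j a_{i,j} f_j`. -/
noncomputable def matrixCoef {A : Type u} [Ring A] (v : A → ℝ) (hv : IsRingNorm v)
    {I : Type v} {J : Type v} {M N : Type v} [AddCommGroup M] [Module A M]
    [AddCommGroup N] [Module A N]
    (TM : M ≃ₗ[A] cA v hv I) (TN : N ≃ₗ[A] cA v hv J)
    (f : M →ₗ[A] N) (i : I) (j : J) : A :=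
  ((TN (f (TM.symm (stdDelta v hv i))) : cA v hv J) : J → A) j

/-- The projection of `c_A(I)` onto the coordinates in a finite set `S`. -/
noncomputable def projCA {A : Type u} [Ring A] (v : A → ℝ) (hv : IsRingNorm v) {I : Type v}
    (S : Finset I) : cA v hv I →ₗ[A] cA v hv I where
  toFun f := ⟨fun i => if i ∈ S then (f : I → A) i else 0, by
    intro ε hε
    refine (f.2 ε hε).subset ?_
    intro i hi
    simp only [Set.mem_setOf_eq] at hi ⊢
    by_cases h : i ∈ S
    · rwa [if_pos h] at hi
    · rw [if_neg h, hv.map_zero] at hi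
      exact absurd hi (not_lt.mpr (le_of_lt hε))⟩
  map_add' f g := by
    apply Subtype.ext
    funext i
    by_cases h : i ∈ S <;> simp [h]
  map_smul' a f := by
    apply Subtype.ext
    funext i
    by_cases h : i ∈ S <;> simp [h]

/-- The projection `π_S : M → M` of an ONable Banach module onto the span of the
basis vectors indexed by a finite set `S`. -/
noncomputable def projON {A : Type u} [Ring A] (v : A → ℝ) (hv : IsRingNorm v)
    {I : Type v} {M : Type v} [AddCommGroup M] [Module A M]
    (T : M ≃ₗ[A] cA v hv I) (S : Finset I) : M →ₗ[A] M :=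
  T.symm.toLinearMap ∘ₗ projCA v hv S ∘ₗ T.toLinearMap
/-- A bundled Banach `A`-module (over the Banach–Tate ring `(A, v)`). -/
structure BanachModule (A : Type u) [Ring A] (v : A → ℝ) : Type (u + 1) where
  carrier : Type u
  [isAddCommGroup : AddCommGroup carrier]
  [isModule : Module A carrier]
  nm : carrier → ℝ
  isNorm : IsModuleNorm v nm
  complete : NormComplete nm

attribute [instance] BanachModule.isAddCommGroup BanachModule.isModule

/-- The (maximum) norm on a product of two normed modules. -/
def prodNorm {M N : Type*} (nmM : M → ℝ) (nmN : N → ℝ) : M × N → ℝ :=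
  fun x => max (nmM x.1) (nmN x.2)

/-- A Banach `A`-module is potentially ONable if it is `A`-linearly homeomorphic to
`c_A(I)` for some set `I`. -/
def PotentiallyONable {A : Type u} [Ring A] (v : A → ℝ) (hv : IsRingNorm v)
    {M : Type u} [AddCommGroup M] [Module A M] (nm : M → ℝ) : Prop :=
  ∃ (I : Type u) (T : M ≃ₗ[A] cA v hv I),
    NormContinuous nm (cNorm v) T ∧ NormContinuous (cNorm v) nm T.symm

/-- A Banach `A`-module has property (Pr) if it is a direct summand of a potentially
ONable Banach `A`-module, i.e. `M × Q` is potentially ONable for some Banach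
`A`-module `Q`. -/
def HasPr {A : Type u} [Ring A] (v : A → ℝ) (hv : IsRingNorm v)
    {M : Type u} [AddCommGroup M] [Module A M] (nm : M → ℝ) : Prop :=
  ∃ Q : BanachModule A v, PotentiallyONable v hv (prodNorm nm Q.nm)

/-!
Both directions rest on an open mapping theorem: a bounded surjection `f` between Banach modules
over a Banach–Tate ring has preimages with `‖x‖ ≤ C ‖f x‖`. Baire's theorem gives a ball in the
closure of the image of a ball, the multiplicative unit `ϖ` rescales this into approximate
preimages with relative error `1/2`, and iterating makes them exact.

If `P × Q ≅ c_A(I)`, write every `p` as a combination of finitely many generators with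
coefficients of size `O(‖p‖)`. Truncating the images of the generators in `c_A(I)` to a finite
set `J` of coordinates then yields an endomorphism of `P` within `‖p‖ / 2` of the identity, hence
invertible, and factoring through `A^J`; so `P` is a direct summand of `A^J`. Conversely, a
projective `P` with generators indexed by `S` splits `A^S ≅ P × ker`, `A^S` is `c_A(S)`, and the
open mapping theorem makes the splitting bounded in both directions.
-/

open Filter

def NormBounded {M N : Type*} (nmM : M → ℝ) (nmN : N → ℝ) (f : M → N) : Prop :=
  ∃ C > 0, ∀ m, nmN (f m) ≤ C * nmM m

noncomputable def supNorm {A ι : Type*} (v : A → ℝ) (x : ι → A) : ℝ :=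
  ⨆ i, v (x i)

theorem le_supNorm {A ι : Type*} [Finite ι] {v : A → ℝ} (x : ι → A) (i : ι) :
    v (x i) ≤ supNorm v x :=
  le_ciSup (f := fun i => v (x i)) (Set.finite_range _).bddAbove i

theorem Module.Projective.of_bijective_comp {R P F : Type*} [Semiring R] [AddCommMonoid P]
    [Module R P] [AddCommMonoid F] [Module R F] [Module.Projective R F] (α : P →ₗ[R] F)
    (β : F →ₗ[R] P) (h : Function.Bijective (β ∘ₗ α)) : Module.Projective R P :=
  Module.Projective.of_split α ((LinearEquiv.ofBijective _ h).symm.toLinearMap ∘ₗ β)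
    (LinearMap.ext (LinearEquiv.ofBijective _ h).symm_apply_apply)

theorem Module.Finite.exists_finset_surjective (R : Type*) {M : Type*} [Semiring R]
    [AddCommMonoid M] [Module R M] [Module.Finite R M] :
    ∃ S : Finset M, Function.Surjective (Fintype.linearCombination R fun i : S => (i : M)) := by
  obtain ⟨S, hS⟩ := Module.Finite.fg_top (R := R) (M := M)
  refine ⟨S, (span_range_eq_top_iff_surjective_fintypeLinearCombination R _).1 ?_⟩
  rwa [Subtype.range_coe_subtype, Finset.setOfPred_mem]

def LinearMap.prodKerEquivOfRightInverse {R M N : Type*} [Ring R] [AddCommGroup M] [Module R M]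
    [AddCommGroup N] [Module R N] (φ : M →ₗ[R] N) (s : N →ₗ[R] M) (h : φ ∘ₗ s = LinearMap.id) :
    (N × LinearMap.ker φ) ≃ₗ[R] M where
  toFun x := s x.1 + x.2
  invFun m := (φ m, ⟨m - s (φ m), by
    rw [LinearMap.mem_ker, map_sub, ← LinearMap.comp_apply, h, LinearMap.id_apply, sub_self]⟩)
  map_add' x y := by
    simp only [Prod.fst_add, Prod.snd_add, map_add, Submodule.coe_add]
    abel
  map_smul' a x := by simp [smul_add]
  left_inv := fun ⟨n, q⟩ => by
    have hn : φ (s n) = n := LinearMap.congr_fun h n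
    ext <;> simp [hn]
  right_inv m := by simp

section

variable {A : Type u} [Ring A] {v : A → ℝ}

namespace IsModuleNorm

variable {M : Type*} [AddCommGroup M] [Module A M] {nm : M → ℝ}

theorem map_zero (h : IsModuleNorm v nm) : nm 0 = 0 := (h.eq_zero_iff 0).2 rfl

theorem map_sub_rev (h : IsModuleNorm v nm) (a b : M) : nm (a - b) = nm (b - a) := by
  rw [← h.map_neg, neg_sub]

theorem sub_le_max (h : IsModuleNorm v nm) (a b : M) : nm (a - b) ≤ max (nm a) (nm b) := by
  simpa only [sub_eq_add_neg, h.map_neg] using h.add_le a (-b)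

theorem sub_le_max_sub (h : IsModuleNorm v nm) (a b c : M) :
    nm (a - c) ≤ max (nm (a - b)) (nm (b - c)) := by
  simpa only [sub_add_sub_cancel] using h.add_le (a - b) (b - c)

theorem sum_le (h : IsModuleNorm v nm) {ι : Type*} (s : Finset ι) (f : ι → M) {B : ℝ}
    (hB : 0 ≤ B) (hf : ∀ i ∈ s, nm (f i) ≤ B) : nm (∑ i ∈ s, f i) ≤ B := by
  classical
  induction s using Finset.induction with
  | empty => simpa [h.map_zero] using hB
  | insert a s ha ih =>
    rw [Finset.sum_insert ha]
    exact (h.add_le _ _).trans (max_le (hf a (Finset.mem_insert_self a s))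
      (ih fun i hi => hf i (Finset.mem_insert_of_mem hi)))

theorem pos_of_ne_zero (h : IsModuleNorm v nm) {m : M} (hm : m ≠ 0) : 0 < nm m :=
  (h.nonneg m).lt_of_ne fun h0 => hm ((h.eq_zero_iff m).1 h0.symm)

theorem eq_zero_of_forall_lt (h : IsModuleNorm v nm) {m : M} (hm : ∀ ε > 0, nm m < ε) : m = 0 :=
  by_contra fun hne => (hm _ (h.pos_of_ne_zero hne)).false

theorem map_units_smul (hv : IsRingNorm v) (h : IsModuleNorm v nm) {w : Aˣ}
    (hw : v w * v ↑w⁻¹ = 1) (m : M) : nm ((w : A) • m) = v w * nm m := by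
  refine le_antisymm (h.smul_le _ m) ?_
  have hle : nm m ≤ v ↑w⁻¹ * nm ((w : A) • m) := by
    simpa only [smul_smul, Units.inv_mul, one_smul] using h.smul_le (↑w⁻¹ : A) ((w : A) • m)
  calc v w * nm m ≤ v w * (v ↑w⁻¹ * nm ((w : A) • m)) :=
        mul_le_mul_of_nonneg_left hle (hv.nonneg _)
    _ = nm ((w : A) • m) := by rw [← mul_assoc, hw, one_mul]

theorem comp_injective (h : IsModuleNorm v nm) {M' : Type*} [AddCommGroup M'] [Module A M']
    (f : M' →ₗ[A] M) (hf : Function.Injective f) : IsModuleNorm v (nm ∘ f) where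
  nonneg m := h.nonneg _
  eq_zero_iff m := by simp only [Function.comp_apply, h.eq_zero_iff, map_eq_zero_iff f hf]
  map_neg m := by simp only [Function.comp_apply, _root_.map_neg, h.map_neg]
  add_le m n := by simp only [Function.comp_apply, map_add, h.add_le]
  smul_le a m := by simp only [Function.comp_apply, map_smul, h.smul_le]

theorem le_of_normLim (h : IsModuleNorm v nm) {s : ℕ → M} {x : M} (hx : NormLim nm s x) {B : ℝ}
    (hs : ∀ n, nm (s n) ≤ B) : nm x ≤ B := by
  by_contra! hB
  obtain ⟨N, hN⟩ := hx (nm x) (((h.nonneg _).trans (hs 0)).trans_lt hB)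
  have := h.sub_le_max_sub x (s N) 0
  rw [sub_zero, sub_zero, h.map_sub_rev] at this
  exact (this.trans_lt (max_lt (hN N le_rfl) ((hs N).trans_lt hB))).false

theorem eq_of_normLim (h : IsModuleNorm v nm) {s : ℕ → M} {x y : M} (hx : NormLim nm s x)
    (hy : NormLim nm s y) : x = y := by
  refine sub_eq_zero.1 (h.eq_zero_of_forall_lt fun ε hε => ?_)
  obtain ⟨N₁, hN₁⟩ := hx ε hε
  obtain ⟨N₂, hN₂⟩ := hy ε hε
  have hxy := h.sub_le_max_sub x (s (max N₁ N₂)) y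
  rw [h.map_sub_rev x (s _)] at hxy
  exact hxy.trans_lt (max_lt (hN₁ _ (le_max_left _ _)) (hN₂ _ (le_max_right _ _)))

abbrev toMetricSpace (h : IsModuleNorm v nm) : MetricSpace M where
  dist x y := nm (x - y)
  dist_self x := by simp only [sub_self, h.map_zero]
  dist_comm := h.map_sub_rev
  dist_triangle x y z := (h.sub_le_max_sub x y z).trans
    (max_le_add_of_nonneg (h.nonneg _) (h.nonneg _))
  eq_of_dist_eq_zero hxy := sub_eq_zero.1 ((h.eq_zero_iff _).1 hxy)

theorem normCauchy_of_le_geometric (h : IsModuleNorm v nm) {s : ℕ → M} {C r : ℝ} (hr : r < 1)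
    (hs : ∀ n, nm (s n - s (n + 1)) ≤ C * r ^ n) : NormCauchy nm s := by
  let := h.toMetricSpace
  intro ε hε
  obtain ⟨N, hN⟩ := Metric.cauchySeq_iff.1 (cauchySeq_of_le_geometric (f := s) r C hr hs) ε hε
  exact ⟨N, fun i j hi hj => hN i hi j hj⟩

theorem exists_ball_subset_closure (h : IsModuleNorm v nm) (hc : NormComplete nm)
    (F : ℕ → Set M) (hF : ⋃ k, F k = Set.univ) :
    ∃ (k : ℕ) (p : M), ∃ ε > 0, ∀ q, nm (q - p) < ε → ∀ η > 0, ∃ z ∈ F k, nm (q - z) < η := by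
  let := h.toMetricSpace
  have : CompleteSpace M := Metric.complete_of_cauchySeq_tendsto fun s hs => by
    obtain ⟨x, hx⟩ := hc s fun ε hε => (Metric.cauchySeq_iff.1 hs ε hε).imp
      fun N hN i j hi hj => hN i hi j hj
    exact ⟨x, Metric.tendsto_atTop.2 hx⟩
  obtain ⟨k, p, hp⟩ := nonempty_interior_of_iUnion_of_closed (fun k => isClosed_closure)
    (Set.eq_univ_of_univ_subset (hF ▸ Set.iUnion_mono fun k => subset_closure))
  obtain ⟨ε, hε, hball⟩ := Metric.mem_nhds_iff.1 (mem_interior_iff_mem_nhds.1 hp)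
  exact ⟨k, p, ε, hε, fun q hq => Metric.mem_closure_iff.1 (hball hq)⟩

end IsModuleNorm

section Bounded

variable {M N : Type*} [AddCommGroup M] [Module A M] [AddCommGroup N] [Module A N]
  {nmM : M → ℝ} {nmN : N → ℝ}

theorem NormBounded.normContinuous {f : M →ₗ[A] N} (hf : NormBounded nmM nmN f) :
    NormContinuous nmM nmN f := by
  obtain ⟨C, hC, hle⟩ := hf
  refine fun m ε hε => ⟨ε / C, div_pos hε hC, fun m' hm' => ?_⟩
  calc nmN (f m' - f m) = nmN (f (m' - m)) := by rw [map_sub]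
    _ ≤ C * nmM (m' - m) := hle _
    _ < C * (ε / C) := mul_lt_mul_of_pos_left hm' hC
    _ = ε := mul_div_cancel₀ ε hC.ne'

theorem NormBounded.normLim_map {f : M →ₗ[A] N} (hf : NormBounded nmM nmN f) {s : ℕ → M} {x : M}
    (hx : NormLim nmM s x) : NormLim nmN (fun n => f (s n)) (f x) := fun ε hε =>
  let ⟨δ, hδ, hcont⟩ := hf.normContinuous x ε hε
  (hx δ hδ).imp fun _ hN n hn => hcont _ (hN n hn)

end Bounded

theorem apply_units_zpow_mul {u : Aˣ} (hmul : ∀ b, v (u * b) = v u * v b) (hu : v u ≠ 0) (k : ℤ)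
    (b : A) : v (↑(u ^ k) * b) = v u ^ k * v b := by
  induction k using Int.induction_on generalizing b with
  | zero => simp
  | succ k ih =>
    rw [zpow_add_one, Units.val_mul, mul_assoc, ih, hmul, zpow_add_one₀ hu]
    ring
  | pred k ih =>
    have hinv : v (↑u⁻¹ * b) = (v u)⁻¹ * v b := by
      rw [eq_inv_mul_iff_mul_eq₀ hu, ← hmul, Units.mul_inv_cancel_left]
    rw [zpow_sub_one, Units.val_mul, mul_assoc, ih, hinv, zpow_sub_one₀ hu]
    ring

namespace IsBanachTate

theorem exists_unit_scaling (hA : IsBanachTate v) :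
    ∃ ρ > 0, ∀ ε > 0, ∀ t > 0, ∃ w : Aˣ, v w * v ↑w⁻¹ = 1 ∧ ε * ρ ≤ v w * t ∧ v w * t < ε := by
  obtain ⟨ϖ, hϖ, hlt, hmul⟩ := hA.exists_unit
  set u := hϖ.unit
  have hu : (u : A) = ϖ := hϖ.unit_spec
  rw [← hu] at hlt hmul
  have hρ : 0 < v u := by
    refine (hA.isRingNorm.nonneg _).lt_of_ne fun h0 => ?_
    have := hmul ↑u⁻¹
    rw [Units.mul_inv, hA.isRingNorm.map_one, ← h0, zero_mul] at this
    exact one_ne_zero this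
  have hpow := apply_units_zpow_mul hmul hρ.ne'
  have hval : ∀ k : ℤ, v ↑(u ^ k) = v u ^ k := fun k => by
    simpa [hA.isRingNorm.map_one] using hpow k 1
  refine ⟨v u, hρ, fun ε hε t ht => ?_⟩
  obtain ⟨n, hlo, hhi⟩ := exists_mem_Ico_zpow (div_pos ht hε) ((one_lt_inv₀ hρ).2 hlt)
  refine ⟨u ^ (n + 1), ?_, ?_, ?_⟩
  · rw [← zpow_neg, hval, hval, ← zpow_add₀ hρ.ne', add_neg_cancel, zpow_zero]
  · rw [inv_zpow, le_div_iff₀ hε, inv_mul_le_iff₀ (zpow_pos hρ n)] at hlo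
    rw [hval, zpow_add_one₀ hρ.ne']
    nlinarith
  · rw [inv_zpow, div_lt_iff₀ hε, lt_inv_mul_iff₀ (zpow_pos hρ _)] at hhi
    rwa [hval]

theorem normBounded_of_normContinuous (hA : IsBanachTate v) {M N : Type*} [AddCommGroup M]
    [Module A M] [AddCommGroup N] [Module A N] {nmM : M → ℝ} {nmN : N → ℝ}
    (hM : IsModuleNorm v nmM) (hN : IsModuleNorm v nmN) {f : M →ₗ[A] N}
    (hf : NormContinuous nmM nmN f) : NormBounded nmM nmN f := by
  obtain ⟨ρ, hρ, hscale⟩ := hA.exists_unit_scaling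
  obtain ⟨δ, hδ, hcont⟩ := hf 0 1 one_pos
  refine ⟨(δ * ρ)⁻¹, by positivity, fun m => ?_⟩
  rcases eq_or_ne m 0 with rfl | hm
  · simp [hM.map_zero, hN.map_zero]
  have ht := hM.pos_of_ne_zero hm
  obtain ⟨w, hw, hlo, hhi⟩ := hscale δ hδ (nmM m) ht
  have hsmall : v w * nmN (f m) < 1 := by
    have := hcont ((w : A) • m) (by rwa [sub_zero, hM.map_units_smul hA.isRingNorm hw])
    rwa [map_zero, sub_zero, map_smul, hN.map_units_smul hA.isRingNorm hw] at this
  rw [inv_mul_eq_div, le_div_iff₀ (by positivity)]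
  nlinarith [mul_le_mul_of_nonneg_left hlo (hN.nonneg (f m)),
    mul_le_mul_of_nonneg_right hsmall.le ht.le]

end IsBanachTate

theorem isModuleNorm_prodNorm (hv : IsRingNorm v) {M N : Type*} [AddCommGroup M] [Module A M]
    [AddCommGroup N] [Module A N] {nmM : M → ℝ} {nmN : N → ℝ} (hM : IsModuleNorm v nmM)
    (hN : IsModuleNorm v nmN) : IsModuleNorm v (prodNorm nmM nmN) where
  nonneg x := le_max_of_le_left (hM.nonneg _)
  eq_zero_iff x := by
    simp only [prodNorm, Prod.ext_iff, Prod.fst_zero, Prod.snd_zero, ← hM.eq_zero_iff,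
      ← hN.eq_zero_iff]
    constructor
    · intro h
      exact ⟨le_antisymm (h ▸ le_max_left _ _) (hM.nonneg _),
        le_antisymm (h ▸ le_max_right _ _) (hN.nonneg _)⟩
    · rintro ⟨h1, h2⟩
      rw [h1, h2, max_self]
  map_neg x := by simp only [prodNorm, Prod.fst_neg, Prod.snd_neg, hM.map_neg, hN.map_neg]
  add_le x y := by
    simp only [prodNorm, Prod.fst_add, Prod.snd_add]
    exact max_le ((hM.add_le _ _).trans (max_le_max (le_max_left _ _) (le_max_left _ _)))
      ((hN.add_le _ _).trans (max_le_max (le_max_right _ _) (le_max_right _ _)))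
  smul_le a x := by
    simp only [prodNorm, Prod.smul_fst, Prod.smul_snd, mul_max_of_nonneg _ _ (hv.nonneg a)]
    exact max_le_max (hM.smul_le _ _) (hN.smul_le _ _)

section CNorm

variable {hv : IsRingNorm v} {I : Type*}

theorem bddAbove_range_cA (f : cA v hv I) : BddAbove (Set.range fun i => v ((f : I → A) i)) := by
  refine ((bddAbove_Iic (a := 1)).union
    ((f.2 1 one_pos).image fun i => v ((f : I → A) i)).bddAbove).mono ?_
  rintro _ ⟨i, rfl⟩
  exact (le_or_gt (v ((f : I → A) i)) 1).imp id fun h => ⟨i, h, rfl⟩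

theorem le_cNorm (f : cA v hv I) (i : I) : v ((f : I → A) i) ≤ cNorm v f :=
  le_ciSup (bddAbove_range_cA f) i

theorem cNorm_le (f : cA v hv I) {B : ℝ} (hB : 0 ≤ B) (h : ∀ i, v ((f : I → A) i) ≤ B) :
    cNorm v f ≤ B :=
  Real.iSup_le h hB

theorem cNorm_nonneg (f : cA v hv I) : 0 ≤ cNorm v f :=
  Real.iSup_nonneg fun _ => hv.nonneg _

variable (hv) in
theorem isModuleNorm_cNorm : IsModuleNorm v (cNorm v (hv := hv) (I := I)) where
  nonneg f := cNorm_nonneg f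
  eq_zero_iff f := by
    refine ⟨fun h => Subtype.ext (funext fun i => (hv.eq_zero_iff _).1
      (le_antisymm (h ▸ le_cNorm f i) (hv.nonneg _))), ?_⟩
    rintro rfl
    exact le_antisymm (cNorm_le _ le_rfl fun i => (hv.map_zero).le)
      (cNorm_nonneg _)
  map_neg f := by
    simp only [cNorm, Submodule.coe_neg, Pi.neg_apply, hv.map_neg]
  add_le f g := cNorm_le _ (le_max_of_le_left (cNorm_nonneg _))
    fun i => (hv.add_le _ _).trans (max_le_max (le_cNorm f i) (le_cNorm g i))
  smul_le a f := cNorm_le _ (mul_nonneg (hv.nonneg a) (cNorm_nonneg _))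
    fun i => (hv.mul_le _ _).trans (mul_le_mul_of_nonneg_left (le_cNorm f i) (hv.nonneg a))

theorem exists_finset_cNorm_sub_projCA_le {ι : Type*} [Finite ι] (m : ι → cA v hv I) {ε : ℝ}
    (hε : 0 < ε) : ∃ J : Finset I, ∀ k, cNorm v (m k - projCA v hv J (m k)) ≤ ε := by
  let J := (Set.finite_iUnion fun k => (m k).2 ε hε).toFinset
  refine ⟨J, fun k => cNorm_le _ hε.le fun i => ?_⟩
  show v ((m k : I → A) i - if i ∈ J then (m k : I → A) i else 0) ≤ ε
  split_ifs with hi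
  · rw [sub_self, hv.map_zero]
    exact hε.le
  · rw [sub_zero]
    by_contra! hlt
    exact hi ((Set.Finite.mem_toFinset _).2 (Set.mem_iUnion.2 ⟨k, hlt⟩))

variable (hv) in
noncomputable def extendCA (J : Finset I) : (J → A) →ₗ[A] cA v hv I :=
  LinearMap.codRestrict (cA v hv I) (Function.ExtendByZero.linearMap A ((↑) : J → I))
    fun x ε hε => J.finite_toSet.subset
      fun i (hi : ε < v (Function.extend ((↑) : J → I) x 0 i)) => by
        by_contra hiJ
        rw [Function.extend_apply' _ _ _ fun ⟨j, hj⟩ => hiJ (hj ▸ j.2), Pi.zero_apply,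
          hv.map_zero] at hi
        exact hε.not_gt hi

theorem projCA_eq_extendCA_comp (J : Finset I) :
    projCA v hv J =
      extendCA hv J ∘ₗ LinearMap.funLeft A A ((↑) : J → I) ∘ₗ (cA v hv I).subtype := by
  ext f i
  show (if i ∈ J then (f : I → A) i else 0) =
    Function.extend ((↑) : J → I) (fun j => (f : I → A) j) 0 i
  split_ifs with hi
  · exact (Subtype.val_injective.extend_apply (fun j : J => (f : I → A) j) 0 ⟨i, hi⟩).symm
  · rw [Function.extend_apply' _ _ _ fun ⟨j, hj⟩ => hi (hj ▸ j.2), Pi.zero_apply]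

end CNorm

theorem supNorm_nonneg (hv : IsRingNorm v) {ι : Type*} (x : ι → A) : 0 ≤ supNorm v x :=
  Real.iSup_nonneg fun _ => hv.nonneg _

section SupNorm

variable {ι : Type*} [Finite ι]

variable (ι) in
/-- `cNorm v (piEquivCA ι hv x)` is `supNorm v x` by definition. -/
def piEquivCA (hv : IsRingNorm v) : (ι → A) ≃ₗ[A] cA v hv ι where
  toFun x := ⟨x, fun _ _ => Set.toFinite _⟩
  invFun f := f
  left_inv _ := rfl
  right_inv _ := rfl
  map_add' _ _ := rfl
  map_smul' _ _ := rfl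

theorem isModuleNorm_supNorm (hv : IsRingNorm v) : IsModuleNorm v (supNorm v : (ι → A) → ℝ) :=
  (isModuleNorm_cNorm hv).comp_injective (piEquivCA ι hv).toLinearMap (piEquivCA ι hv).injective

theorem normComplete_supNorm (hAc : NormComplete v) : NormComplete (supNorm v : (ι → A) → ℝ) := by
  intro s hs
  have hcoord : ∀ i, ∃ y, NormLim v (fun n => s n i) y := fun i =>
    hAc _ fun ε hε => (hs ε hε).imp fun N hN m n hm hn =>
      (le_supNorm (s m - s n) i).trans_lt (hN m n hm hn)
  choose y hy using hcoord
  refine ⟨y, fun ε hε => ?_⟩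
  obtain ⟨N, hN⟩ := eventually_atTop.1 (eventually_all.2 fun i =>
    eventually_atTop.2 (hy i (ε / 2) (half_pos hε)))
  exact ⟨N, fun n hn => (Real.iSup_le (fun i => (hN n hn i).le) (half_pos hε).le).trans_lt
    (half_lt_self hε)⟩

variable {N : Type*} [AddCommGroup N] [Module A N] {nmN : N → ℝ}

theorem apply_le_mul_supNorm [Fintype ι] [DecidableEq ι] (hv : IsRingNorm v)
    (hN : IsModuleNorm v nmN) (f : (ι → A) →ₗ[A] N) {δ : ℝ} (hδ : 0 ≤ δ)
    (h : ∀ i, nmN (f (Pi.single i 1)) ≤ δ) (x : ι → A) : nmN (f x) ≤ δ * supNorm v x := by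
  conv_lhs => rw [← (Pi.basisFun A ι).sum_repr x]
  simp only [Pi.basisFun_repr, Pi.basisFun_apply, map_sum, map_smul]
  refine hN.sum_le _ _ (mul_nonneg hδ (supNorm_nonneg hv x)) fun i _ => ?_
  rw [mul_comm]
  exact (hN.smul_le _ _).trans (mul_le_mul (le_supNorm x i) (h i) (hN.nonneg _)
    (supNorm_nonneg hv x))

theorem normBounded_supNorm (hv : IsRingNorm v) (hN : IsModuleNorm v nmN) (f : (ι → A) →ₗ[A] N) :
    NormBounded (supNorm v) nmN f := by
  classical
  have := Fintype.ofFinite ι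
  set δ := ∑ i, nmN (f (Pi.single i 1))
  have hδ : 0 ≤ δ := Finset.sum_nonneg fun i _ => hN.nonneg _
  refine ⟨δ + 1, by positivity, fun x => ?_⟩
  refine (apply_le_mul_supNorm hv hN f hδ (fun i => ?_) x).trans ?_
  · exact Finset.single_le_sum (fun j _ => hN.nonneg (f (Pi.single j 1))) (Finset.mem_univ i)
  · exact mul_le_mul_of_nonneg_right (le_add_of_nonneg_right zero_le_one) (supNorm_nonneg hv x)

end SupNorm

section OpenMapping

variable {X Y : Type*} [AddCommGroup X] [Module A X] [AddCommGroup Y] [Module A Y]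
  {nmX : X → ℝ} {nmY : Y → ℝ}

/-- In the ultrametric setting the corrections in the iteration do not add up, so the exact
preimage obeys the same bound as the approximate ones. -/
theorem exists_preimage_of_approx (hX : IsModuleNorm v nmX) (hXc : NormComplete nmX)
    (hY : IsModuleNorm v nmY) {f : X →ₗ[A] Y} (hf : NormBounded nmX nmY f) {C c : ℝ}
    (hC : 0 ≤ C) (hc0 : 0 ≤ c) (hc1 : c < 1)
    (happrox : ∀ y, ∃ x, nmX x ≤ C * nmY y ∧ nmY (y - f x) ≤ c * nmY y) (y : Y) :
    ∃ x, f x = y ∧ nmX x ≤ C * nmY y := by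
  choose g hgX hgY using happrox
  set r : ℕ → Y := fun n => (fun z => z - f (g z))^[n] y
  have hr_succ : ∀ n, r (n + 1) = r n - f (g (r n)) := fun n =>
    Function.iterate_succ_apply' _ _ _
  have hr : ∀ n, nmY (r n) ≤ c ^ n * nmY y := by
    intro n
    induction n with
    | zero => simp [r]
    | succ n ih =>
      rw [hr_succ, pow_succ, mul_comm _ c, mul_assoc]
      exact (hgY _).trans (mul_le_mul_of_nonneg_left ih hc0)
  have hg : ∀ n, nmX (g (r n)) ≤ C * nmY y * c ^ n := fun n => by
    rw [mul_assoc, mul_comm (nmY y)]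
    exact (hgX _).trans (mul_le_mul_of_nonneg_left (hr n) hC)
  set s : ℕ → X := fun n => ∑ j ∈ Finset.range n, g (r j)
  have hfs : ∀ n, f (s n) = y - r n := by
    intro n
    induction n with
    | zero => simp [s, r]
    | succ n ih =>
      simp only [s, Finset.sum_range_succ, map_add] at ih ⊢
      rw [ih, hr_succ]
      abel
  have hcauchy : NormCauchy nmX s := hX.normCauchy_of_le_geometric hc1 fun n => by
    simpa only [s, Finset.sum_range_succ, sub_add_cancel_left, hX.map_neg] using hg n
  obtain ⟨x, hx⟩ := hXc s hcauchy
  have hCy : 0 ≤ C * nmY y := mul_nonneg hC (hY.nonneg y)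
  refine ⟨x, hY.eq_of_normLim (hf.normLim_map hx) fun ε hε => ?_,
    hX.le_of_normLim hx fun n => hX.sum_le _ _ hCy fun j _ =>
      (hg j).trans (mul_le_of_le_one_right hCy (pow_le_one₀ hc0 hc1.le))⟩
  obtain ⟨N, hN⟩ := eventually_atTop.1
    (((tendsto_pow_atTop_nhds_zero_of_lt_one hc0 hc1).mul_const (nmY y)).eventually
      (gt_mem_nhds (by rwa [zero_mul])))
  refine ⟨N, fun n hn => ?_⟩
  rw [hfs, sub_sub_cancel_left, hY.map_neg]
  exact (hr n).trans_lt (hN n hn)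

theorem bijective_of_norm_sub_le (hX : IsModuleNorm v nmX) (hXc : NormComplete nmX)
    {w : X →ₗ[A] X} {c : ℝ} (hc0 : 0 ≤ c) (hc1 : c < 1) (hw : ∀ x, nmX (w x - x) ≤ c * nmX x) :
    Function.Bijective w := by
  have hwc : ∀ x, c * nmX x ≤ nmX x := fun x =>
    mul_le_of_le_one_left (hX.nonneg x) hc1.le
  refine ⟨(injective_iff_map_eq_zero w).2 fun x hx => ?_, fun y => ?_⟩
  · have hle := hw x
    rw [hx, zero_sub, hX.map_neg] at hle
    refine (hX.eq_zero_iff x).1 (le_antisymm ?_ (hX.nonneg x))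
    nlinarith [hX.nonneg x]
  · have hbdd : NormBounded nmX nmX w := ⟨1, one_pos, fun x => by
      rw [one_mul, ← sub_add_cancel (w x) x]
      exact (hX.add_le _ _).trans (max_le ((hw x).trans (hwc x)) le_rfl)⟩
    obtain ⟨x, hx, -⟩ := exists_preimage_of_approx hX hXc hX hbdd zero_le_one hc0 hc1
      (fun y => ⟨y, (one_mul _).ge, by rw [hX.map_sub_rev]; exact hw y⟩) y
    exact ⟨x, hx⟩

theorem exists_ball_subset_closure_image (hX : IsModuleNorm v nmX) (hY : IsModuleNorm v nmY)
    (hYc : NormComplete nmY) {f : X →ₗ[A] Y} (hf : Function.Surjective f) :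
    ∃ r > 0, ∃ ε > 0, ∀ y, nmY y < ε → ∀ η > 0, ∃ x, nmX x ≤ r ∧ nmY (y - f x) < η := by
  obtain ⟨k, p, ε, hε, hball⟩ := hY.exists_ball_subset_closure hYc
    (fun k : ℕ => f '' {x | nmX x ≤ k}) (Set.eq_univ_of_forall fun y => by
      obtain ⟨x, rfl⟩ := hf y
      exact Set.mem_iUnion.2 ⟨⌈nmX x⌉₊, x, Nat.le_ceil (nmX x), rfl⟩)
  refine ⟨k + 1, by positivity, ε, hε, fun y hy η hη => ?_⟩
  obtain ⟨_, ⟨x₁, hx₁, rfl⟩, h₁⟩ := hball (y + p) (by rwa [add_sub_cancel_right]) η hη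
  obtain ⟨_, ⟨x₂, hx₂, rfl⟩, h₂⟩ := hball p (by rwa [sub_self, hY.map_zero]) η hη
  refine ⟨x₁ - x₂, ((hX.sub_le_max _ _).trans (max_le hx₁ hx₂)).trans (by linarith), ?_⟩
  have hsplit : y - f (x₁ - x₂) = (y + p - f x₁) - (p - f x₂) := by
    rw [map_sub]
    abel
  rw [hsplit]
  exact (hY.sub_le_max _ _).trans_lt (max_lt h₁ h₂)

namespace IsBanachTate

theorem exists_approx_preimage_norm_le (hA : IsBanachTate v) (hX : IsModuleNorm v nmX)
    (hY : IsModuleNorm v nmY) (hYc : NormComplete nmY) {f : X →ₗ[A] Y}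
    (hf : Function.Surjective f) :
    ∃ C > 0, ∀ y, ∃ x, nmX x ≤ C * nmY y ∧ nmY (y - f x) ≤ 2⁻¹ * nmY y := by
  have hv := hA.isRingNorm
  obtain ⟨r, hr, ε, hε, hball⟩ := exists_ball_subset_closure_image hX hY hYc hf
  obtain ⟨ρ, hρ, hscale⟩ := hA.exists_unit_scaling
  refine ⟨r / (ε * ρ), by positivity, fun y => ?_⟩
  rcases eq_or_ne y 0 with rfl | hy
  · exact ⟨0, by simp [hX.map_zero, hY.map_zero]⟩
  obtain ⟨w, hw, hlo, hhi⟩ := hscale ε hε (nmY y) (hY.pos_of_ne_zero hy)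
  have hw' : v ↑w⁻¹ * v ↑w⁻¹⁻¹ = 1 := by rw [inv_inv, mul_comm, hw]
  obtain ⟨x, hx, hxy⟩ := hball ((w : A) • y) (by rwa [hY.map_units_smul hv hw])
    (2⁻¹ * (ε * ρ)) (by positivity)
  have hinv : v ↑w⁻¹ * (ε * ρ) ≤ nmY y :=
    calc v ↑w⁻¹ * (ε * ρ) ≤ v ↑w⁻¹ * (v w * nmY y) := mul_le_mul_of_nonneg_left hlo (hv.nonneg _)
      _ = nmY y := by rw [← mul_assoc, mul_comm (v ↑w⁻¹), hw, one_mul]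
  refine ⟨(↑w⁻¹ : A) • x, ?_, ?_⟩
  · rw [hX.map_units_smul hv hw', div_mul_eq_mul_div, le_div_iff₀ (by positivity)]
    nlinarith [mul_le_mul_of_nonneg_right hinv (hX.nonneg x), hX.nonneg x, hv.nonneg ↑w⁻¹,
      mul_le_mul_of_nonneg_left hx (hY.nonneg y)]
  · have hsmul : y - f ((↑w⁻¹ : A) • x) = (↑w⁻¹ : A) • ((w : A) • y - f x) := by
      rw [map_smul, smul_sub, smul_smul, Units.inv_mul, one_smul]
    rw [hsmul, hY.map_units_smul hv hw']
    calc v ↑w⁻¹ * nmY ((w : A) • y - f x) ≤ v ↑w⁻¹ * (2⁻¹ * (ε * ρ)) :=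
          mul_le_mul_of_nonneg_left hxy.le (hv.nonneg _)
      _ = 2⁻¹ * (v ↑w⁻¹ * (ε * ρ)) := by ring
      _ ≤ 2⁻¹ * nmY y := mul_le_mul_of_nonneg_left hinv (by norm_num)

theorem exists_preimage_norm_le (hA : IsBanachTate v) (hX : IsModuleNorm v nmX)
    (hXc : NormComplete nmX) (hY : IsModuleNorm v nmY) (hYc : NormComplete nmY)
    {f : X →ₗ[A] Y} (hfb : NormBounded nmX nmY f) (hf : Function.Surjective f) :
    ∃ C > 0, ∀ y, ∃ x, f x = y ∧ nmX x ≤ C * nmY y :=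
  let ⟨C, hC, happrox⟩ := hA.exists_approx_preimage_norm_le hX hY hYc hf
  ⟨C, hC, exists_preimage_of_approx hX hXc hY hfb hC.le (by norm_num) (by norm_num) happrox⟩

theorem exists_preimage_supNorm_le (hA : IsBanachTate v) (hY : IsModuleNorm v nmY)
    (hYc : NormComplete nmY) {ι : Type*} [Finite ι] {f : (ι → A) →ₗ[A] Y}
    (hf : Function.Surjective f) : ∃ C > 0, ∀ y, ∃ x, f x = y ∧ supNorm v x ≤ C * nmY y :=
  hA.exists_preimage_norm_le (isModuleNorm_supNorm hA.isRingNorm)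
    (normComplete_supNorm hA.complete) hY hYc (normBounded_supNorm hA.isRingNorm hY f) hf

end IsBanachTate

end OpenMapping

section Splitting

variable {X Y : Type*} [AddCommGroup X] [Module A X] [AddCommGroup Y] [Module A Y]
  {nmX : X → ℝ} {nmY : Y → ℝ}

theorem normComplete_ker (hXc : NormComplete nmX) (hY : IsModuleNorm v nmY) {f : X →ₗ[A] Y}
    (hf : NormBounded nmX nmY f) : NormComplete fun q : LinearMap.ker f => nmX q := by
  intro s hs
  obtain ⟨x, hx⟩ := hXc (fun n => s n) hs
  have hzero : NormLim nmY (fun n => f (s n)) 0 := fun ε hε =>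
    ⟨0, fun n _ => by simpa only [sub_zero, LinearMap.mem_ker.1 (s n).2, hY.map_zero]⟩
  exact ⟨⟨x, hY.eq_of_normLim (hf.normLim_map hx) hzero⟩, hx⟩

theorem normBounded_prodKerEquivOfRightInverse (hX : IsModuleNorm v nmX)
    (hY : IsModuleNorm v nmY) {φ : X →ₗ[A] Y} {s : Y →ₗ[A] X} (h : φ ∘ₗ s = LinearMap.id)
    (hφ : NormBounded nmX nmY φ) (hs : NormBounded nmY nmX s) :
    NormBounded (prodNorm nmY fun q : LinearMap.ker φ => nmX q) nmX
        (φ.prodKerEquivOfRightInverse s h) ∧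
      NormBounded nmX (prodNorm nmY fun q : LinearMap.ker φ => nmX q)
        (φ.prodKerEquivOfRightInverse s h).symm := by
  obtain ⟨Cs, hCs, hsle⟩ := hs
  obtain ⟨Cφ, hCφ, hφle⟩ := hφ
  refine ⟨⟨max Cs 1, by positivity, fun ⟨y, q⟩ => ?_⟩,
    ⟨max Cφ (max 1 (Cs * Cφ)), by positivity, fun x => ?_⟩⟩
  · show nmX (s y + q) ≤ max Cs 1 * max (nmY y) (nmX q)
    refine (hX.add_le _ _).trans (max_le ?_ ?_)
    · exact (hsle y).trans
        (mul_le_mul (le_max_left _ _) (le_max_left _ _) (hY.nonneg _) (by positivity))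
    · exact (le_max_right _ _).trans
        (le_mul_of_one_le_left (le_max_of_le_left (hY.nonneg _)) (le_max_right _ _))
  · show max (nmY (φ x)) (nmX (x - s (φ x))) ≤ max Cφ (max 1 (Cs * Cφ)) * nmX x
    have hx := hX.nonneg x
    refine max_le ((hφle x).trans (mul_le_mul_of_nonneg_right (le_max_left _ _) hx))
      ((hX.sub_le_max _ _).trans (max_le ?_ ?_))
    · exact le_mul_of_one_le_left hx ((le_max_left _ _).trans (le_max_right _ _))
    · calc nmX (s (φ x)) ≤ Cs * (Cφ * nmX x) :=
            (hsle _).trans (mul_le_mul_of_nonneg_left (hφle x) hCs.le)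
        _ ≤ max Cφ (max 1 (Cs * Cφ)) * nmX x := by
            rw [← mul_assoc]
            exact mul_le_mul_of_nonneg_right ((le_max_right _ _).trans (le_max_right _ _)) hx

end Splitting

theorem projective_of_retraction_cA (hA : IsBanachTate v) {P : Type*} [AddCommGroup P]
    [Module A P] [Module.Finite A P] {nmP : P → ℝ} (hP : IsModuleNorm v nmP)
    (hPc : NormComplete nmP) {I : Type*}
    (i : P →ₗ[A] cA v hA.isRingNorm I) (r : cA v hA.isRingNorm I →ₗ[A] P)
    (hri : ∀ p, r (i p) = p) (hr : NormBounded (cNorm v) nmP r) : Module.Projective A P := by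
  have hv := hA.isRingNorm
  obtain ⟨S, hS⟩ := Module.Finite.exists_finset_surjective A (M := P)
  set φ := Fintype.linearCombination A fun s : S => (s : P)
  obtain ⟨C, hC, hpre⟩ := hA.exists_preimage_supNorm_le hP hPc hS
  obtain ⟨Cr, hCr, hrle⟩ := hr
  set ε := (2 * Cr * C)⁻¹
  have hε : 0 < ε := by positivity
  obtain ⟨J, hJ⟩ := exists_finset_cNorm_sub_projCA_le (fun s : S => i s) hε
  have hw : ∀ p, nmP (r (projCA v hv J (i p)) - p) ≤ 2⁻¹ * nmP p := by
    intro p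
    obtain ⟨x, rfl, hx⟩ := hpre p
    have htail : cNorm v (i (φ x) - projCA v hv J (i (φ x))) ≤ ε * supNorm v x := by
      classical
      refine apply_le_mul_supNorm hv (isModuleNorm_cNorm hv)
        ((LinearMap.id - projCA v hv J) ∘ₗ i ∘ₗ φ) hε.le (fun s => ?_) x
      simpa [φ] using hJ s
    calc nmP (r (projCA v hv J (i (φ x))) - φ x)
        = nmP (r (i (φ x) - projCA v hv J (i (φ x)))) := by
          rw [map_sub, hri, hP.map_sub_rev]
      _ ≤ Cr * (ε * (C * nmP (φ x))) :=
          (hrle _).trans (mul_le_mul_of_nonneg_left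
            (htail.trans (mul_le_mul_of_nonneg_left hx hε.le)) hCr.le)
      _ = 2⁻¹ * nmP (φ x) := by
          simp only [ε]
          field_simp
  have hbij := bijective_of_norm_sub_le hP hPc (w := r ∘ₗ projCA v hv J ∘ₗ i) (by norm_num)
    (by norm_num) hw
  rw [projCA_eq_extendCA_comp] at hbij
  exact Module.Projective.of_bijective_comp
    (LinearMap.funLeft A A ((↑) : J → I) ∘ₗ (cA v hv I).subtype ∘ₗ i) (r ∘ₗ extendCA hv J) hbij

section Pr

variable {P : Type u} [AddCommGroup P] [Module A P] {nmP : P → ℝ}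

theorem projective_of_hasPr (hA : IsBanachTate v) (hP : IsModuleNorm v nmP)
    (hPc : NormComplete nmP) [Module.Finite A P] (h : HasPr v hA.isRingNorm nmP) :
    Module.Projective A P := by
  obtain ⟨Q, I, T, -, hTsymm⟩ := h
  obtain ⟨C, hC, hle⟩ := hA.normBounded_of_normContinuous (isModuleNorm_cNorm hA.isRingNorm)
    (isModuleNorm_prodNorm hA.isRingNorm hP Q.isNorm) (f := T.symm.toLinearMap) hTsymm
  exact projective_of_retraction_cA hA hP hPc (T.toLinearMap ∘ₗ LinearMap.inl A P Q.carrier)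
    (LinearMap.fst A P Q.carrier ∘ₗ T.symm.toLinearMap) (fun p => by simp)
    ⟨C, hC, fun f => (le_max_left _ _).trans (hle f)⟩

theorem hasPr_of_projective (hA : IsBanachTate v) (hP : IsModuleNorm v nmP)
    (hPc : NormComplete nmP) [Module.Finite A P] [Module.Projective A P] :
    HasPr v hA.isRingNorm nmP := by
  have hv := hA.isRingNorm
  obtain ⟨S, hS⟩ := Module.Finite.exists_finset_surjective A (M := P)
  set φ := Fintype.linearCombination A fun s : S => (s : P)
  obtain ⟨s, hs⟩ := Module.projective_lifting_property φ LinearMap.id hS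
  have hX := isModuleNorm_supNorm (ι := S) hv
  have hφ := normBounded_supNorm hv hP φ
  have hsb : NormBounded nmP (supNorm v) s := by
    obtain ⟨C, hC, hpre⟩ := hA.exists_preimage_supNorm_le hP hPc hS
    obtain ⟨Ce, hCe, hsφ⟩ := normBounded_supNorm hv hX (s ∘ₗ φ)
    refine ⟨Ce * C, by positivity, fun p => ?_⟩
    obtain ⟨x, rfl, hx⟩ := hpre p
    rw [mul_assoc]
    exact (hsφ x).trans (mul_le_mul_of_nonneg_left hx hCe.le)
  obtain ⟨⟨C₁, hC₁, hT⟩, ⟨C₂, hC₂, hTsymm⟩⟩ :=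
    normBounded_prodKerEquivOfRightInverse hX hP hs hφ hsb
  exact ⟨⟨LinearMap.ker φ, fun q => supNorm v (q : S → A),
    hX.comp_injective (LinearMap.ker φ).subtype Subtype.val_injective,
    normComplete_ker (normComplete_supNorm hA.complete) hP hφ⟩,
    S, φ.prodKerEquivOfRightInverse s hs ≪≫ₗ piEquivCA S hv,
    NormBounded.normContinuous ⟨C₁, hC₁, hT⟩,
    NormBounded.normContinuous ⟨C₂, hC₂, fun x => hTsymm (x : S → A)⟩⟩

end Pr

end

/-- A finite Banach module over a Banach–Tate ring has property (Pr)
if and only if it is projective as an abstract `A`-module. -/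
theorem hasPr_iff_projective_of_finite
    {A : Type u} [Ring A] (v : A → ℝ) (hA : IsBanachTate v)
    {P : Type u} [AddCommGroup P] [Module A P] (nmP : P → ℝ)
    (hP : IsModuleNorm v nmP) (hPc : NormComplete nmP)
    (hfin : Module.Finite A P) :
    HasPr v hA.isRingNorm nmP ↔ Module.Projective A P :=
  ⟨projective_of_hasPr hA hP hPc, fun _ => hasPr_of_projective hA hP hPc⟩
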